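/- For any probability measures P, Q, JS(P,Q) ≥ g(√Δ(P,Q)) where g(t) = ((1+t)/2)·log(1+t) + ((1-t)/2)·log(1-t), JS is the Jensen–Shannon divergence, and Δ the triangular discrimination. Equivalently, JS(P,Q) ≥ log 2 − H_b(R_√Δ(P,Q)) where H_b is the binary entropy. -/

import Mathlib

open Real MeasureTheory

/-- Binary Jensen-Shannon divergence (natural log). -/
noncomputable def gJS (t : ℝ) : ℝ :=
  ((1 + t) / 2) * Real.log (1 + t) + ((1 - t) / 2) * Real.log (1 - t)

noncomputable def aT (t : ℝ) : ℝ := (Real.log (1 + t) - Real.log (1 - t)) / 2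

lemma gJS_neg (t : ℝ) : gJS (-t) = gJS t := by
  simp only [gJS]
  rw [show (1:ℝ) + -t = 1 - t by ring, show (1:ℝ) - -t = 1 + t by ring]
  ring

lemma aT_zero : aT 0 = 0 := by simp [aT]

lemma gJS_zero : gJS 0 = 0 := by simp [gJS]

lemma mono_helper {f f' : ℝ → ℝ} {a b : ℝ} (hab : a ≤ b)
    (hd : ∀ x ∈ Set.Icc a b, HasDerivAt f (f' x) x)
    (h0 : ∀ x ∈ Set.Ioo a b, 0 ≤ f' x) : f a ≤ f b := by
  have hmono := monotoneOn_of_hasDerivWithinAt_nonneg (convex_Icc a b)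
    (fun x hx => (hd x hx).continuousAt.continuousWithinAt)
    (fun x hx => (hd x (Set.Ioo_subset_Icc_self (by rwa [interior_Icc] at hx))).hasDerivWithinAt)
    (fun x hx => h0 x (by rwa [interior_Icc] at hx))
  exact hmono (Set.left_mem_Icc.2 hab) (Set.right_mem_Icc.2 hab) hab

lemma hasDerivAt_log1p {t : ℝ} (h : -1 < t) :
    HasDerivAt (fun t => Real.log (1 + t)) (1 / (1 + t)) t := by
  have h1 : HasDerivAt (fun t : ℝ => 1 + t) 1 t := by
    simpa using (hasDerivAt_id t).const_add (1:ℝ)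
  simpa using h1.log (by linarith)

lemma hasDerivAt_log1m {t : ℝ} (h : t < 1) :
    HasDerivAt (fun t => Real.log (1 - t)) (-(1 / (1 - t))) t := by
  have h1 : HasDerivAt (fun t : ℝ => 1 - t) (-1) t := by
    simpa using (hasDerivAt_id t).const_sub (1:ℝ)
  have := h1.log (by intro hh; linarith)
  convert this using 1
  field_simp

lemma hasDerivAt_aT {t : ℝ} (h1 : -1 < t) (h2 : t < 1) :
    HasDerivAt aT (1 / (1 - t^2)) t := by
  have hne1 : (1:ℝ) + t ≠ 0 := by linarith
  have hne2 : (1:ℝ) - t ≠ 0 := by linarith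
  have := ((hasDerivAt_log1p h1).sub (hasDerivAt_log1m h2)).div_const 2
  refine this.congr_deriv ?_
  have hne3 : (1:ℝ) - t^2 ≠ 0 := by nlinarith
  field_simp
  ring

lemma hasDerivAt_gJS {t : ℝ} (h1 : -1 < t) (h2 : t < 1) :
    HasDerivAt gJS (aT t) t := by
  have hne1 : (1:ℝ) + t ≠ 0 := by linarith
  have hne2 : (1:ℝ) - t ≠ 0 := by linarith
  have d1 : HasDerivAt (fun t : ℝ => (1 + t) / 2) (1/2) t := by
    simpa using ((hasDerivAt_id t).const_add (1:ℝ)).div_const 2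
  have d2 : HasDerivAt (fun t : ℝ => (1 - t) / 2) (-(1/2)) t := by
    have := ((hasDerivAt_id t).const_sub (1:ℝ)).div_const 2
    refine this.congr_deriv ?_; norm_num
  have h := (d1.mul (hasDerivAt_log1p h1)).add (d2.mul (hasDerivAt_log1m h2))
  have : HasDerivAt gJS
      (1/2 * Real.log (1 + t) + (1 + t)/2 * (1/(1 + t)) +
        (-(1/2) * Real.log (1 - t) + (1 - t)/2 * (-(1/(1 - t))))) t := h
  convert this using 1
  simp only [aT]
  field_simp
  ring

lemma aT_ge {t : ℝ} (h0 : 0 ≤ t) (h1 : t < 1) : t ≤ aT t := by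
  have key := mono_helper (f := fun u => aT u - u) (f' := fun u => 1/(1 - u^2) - 1) h0
    (fun x hx => by
      have hx0 := hx.1; have hx1 := lt_of_le_of_lt hx.2 h1
      exact ((hasDerivAt_aT (by linarith) hx1).sub (hasDerivAt_id x)))
    (fun x hx => by
      have hx0 : 0 ≤ x := le_of_lt hx.1
      have hx1 : x < 1 := lt_of_lt_of_le hx.2 h1.le
      have hpos : 0 < 1 - x^2 := by nlinarith
      have : 1 ≤ 1/(1 - x^2) := by rw [le_div_iff₀ hpos]; nlinarith
      linarith)
  simp only [aT_zero, sub_zero] at key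
  linarith [key]

lemma aT_le_frac {t : ℝ} (h0 : 0 ≤ t) (h1 : t < 1) : aT t ≤ t / (1 - t^2) := by
  have key := mono_helper (f := fun u => u/(1 - u^2) - aT u)
    (f' := fun u => (1*(1 - u^2) - u * (-(2*u)))/(1 - u^2)^2 - 1/(1 - u^2)) h0
    (fun x hx => by
      have hx0 := hx.1; have hx1 := lt_of_le_of_lt hx.2 h1
      have hpos : 0 < 1 - x^2 := by nlinarith
      have hden : HasDerivAt (fun u : ℝ => 1 - u^2) (-(2*x)) x := by
        have := (hasDerivAt_pow 2 x).const_sub (1:ℝ)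
        refine this.congr_deriv ?_; push_cast; ring
      have hdiv := (hasDerivAt_id x).div hden hpos.ne'
      have := hdiv.sub (hasDerivAt_aT (by linarith) hx1)
      exact this)
    (fun x hx => by
      have hx0 : 0 ≤ x := le_of_lt hx.1
      have hx1 : x < 1 := lt_of_lt_of_le hx.2 h1.le
      have hpos : 0 < 1 - x^2 := by nlinarith
      have heq : (1*(1 - x^2) - x * (-(2*x)))/(1 - x^2)^2 - 1/(1 - x^2)
          = 2*x^2/(1 - x^2)^2 := by field_simp; ring
      rw [heq]; positivity)
  simp only [aT_zero, sub_zero] at key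
  norm_num at key
  linarith [key]

lemma ratio_mono {a b : ℝ} (h0 : 0 ≤ a) (hab : a ≤ b) (hb : b < 1) :
    aT a * b ≤ aT b * a := by
  rcases eq_or_lt_of_le h0 with h | h
  · rw [← h]; simp [aT_zero]
  · have hbpos : 0 < b := lt_of_lt_of_le h hab
    have key := mono_helper (f := fun u => aT u / u)
      (f' := fun u => (1/(1 - u^2) * u - aT u * 1)/u^2) hab
      (fun x hx => by
        have hx0 : 0 < x := lt_of_lt_of_le h hx.1
        have hx1 : x < 1 := lt_of_le_of_lt hx.2 hb
        exact (hasDerivAt_aT (by linarith) hx1).div (hasDerivAt_id x) hx0.ne')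
      (fun x hx => by
        have hx0 : 0 < x := lt_of_lt_of_le h hx.1.le
        have hx1 : x < 1 := lt_of_lt_of_le hx.2 hb.le
        have hpos : 0 < 1 - x^2 := by nlinarith
        have hle := aT_le_frac hx0.le hx1
        have hnum : 0 ≤ 1/(1 - x^2) * x - aT x * 1 := by
          have : 1/(1 - x^2) * x = x/(1 - x^2) := by ring
          rw [this, mul_one]; linarith
        exact div_nonneg hnum (sq_nonneg x))
    rw [div_le_div_iff₀ h hbpos] at key
    exact key

lemma key0 {t0 s : ℝ} (h0 : 0 ≤ t0) (h1 : t0 < 1) (hs0 : 0 ≤ s) (hs1 : s < 1) :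
    gJS t0 + aT t0 / (2*t0) * (s^2 - t0^2) ≤ gJS s := by
  rcases eq_or_lt_of_le h0 with h | ht0pos
  · rw [← h]
    simp only [aT_zero, gJS_zero, zero_div, zero_mul, zero_add, mul_zero]
    have := mono_helper (f := gJS) (f' := aT) hs0
      (fun x hx => hasDerivAt_gJS (by linarith [hx.1]) (lt_of_le_of_lt hx.2 hs1))
      (fun x hx => le_trans hx.1.le (aT_ge hx.1.le (lt_trans hx.2 hs1)))
    rw [gJS_zero] at this
    exact this
  · set c := aT t0 / (2*t0) with hc
    have hH : ∀ x, 0 ≤ x → x < 1 →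
        HasDerivAt (fun t => gJS t - c * t^2) (aT x - c * (2*x)) x := by
      intro x hx0 hx1
      have := (hasDerivAt_gJS (by linarith) hx1).sub ((hasDerivAt_pow 2 x).const_mul c)
      refine this.congr_deriv ?_
      push_cast; ring
    have hmain : gJS t0 - c * t0^2 ≤ gJS s - c * s^2 := by
      rcases le_total s t0 with hle | hle
      · have := mono_helper (f := fun t => -(gJS t - c * t^2))
          (f' := fun x => -(aT x - c * (2*x))) hle
          (fun x hx => (hH x (le_trans hs0 hx.1) (lt_of_le_of_lt hx.2 h1)).neg)
          (fun x hx => by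
            have hx0 : 0 ≤ x := le_trans hs0 hx.1.le
            have hx1 : x < 1 := lt_of_lt_of_le hx.2 h1.le
            have hr := ratio_mono hx0 hx.2.le h1
            have he : c * (2*x) = aT t0 * x / t0 := by
              rw [hc]; field_simp
            have : aT x ≤ aT t0 * x / t0 := by
              rw [le_div_iff₀ ht0pos]; linarith
            rw [he]
            linarith)
        linarith [this]
      · have := mono_helper (f := fun t => gJS t - c * t^2)
          (f' := fun x => aT x - c * (2*x)) hle
          (fun x hx => hH x (le_trans h0 hx.1) (lt_of_le_of_lt hx.2 hs1))
          (fun x hx => by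
            have hx0 : 0 ≤ x := le_trans h0 hx.1.le
            have hx1 : x < 1 := lt_trans hx.2 hs1
            have hr := ratio_mono h0 hx.1.le hx1
            have he : c * (2*x) = aT t0 * x / t0 := by
              rw [hc]; field_simp
            have : aT t0 * x / t0 ≤ aT x := by
              rw [div_le_iff₀ ht0pos]; linarith
            rw [he]; linarith)
        linarith [this]
    linarith [hmain]

lemma keylem {t0 s : ℝ} (h0 : 0 ≤ t0) (h1 : t0 < 1) (hs : -1 < s) (hs1 : s < 1) :
    gJS t0 + aT t0 / (2*t0) * (s^2 - t0^2) ≤ gJS s := by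
  rcases le_or_gt 0 s with h | h
  · exact key0 h0 h1 h hs1
  · have := key0 h0 h1 (by linarith : (0:ℝ) ≤ -s) (by linarith)
    rw [gJS_neg, neg_sq] at this
    exact this

/-- Binary entropy of R_t = ((1-t)/2, (1+t)/2) (natural log). -/
noncomputable def Hb (t : ℝ) : ℝ :=
  -(((1 - t) / 2) * Real.log ((1 - t) / 2)) - ((1 + t) / 2) * Real.log ((1 + t) / 2)

theorem js_ge_gJS_sqrt_triangular {X : Type*} [MeasurableSpace X] (μ : Measure X)
    (p q : X → ℝ) (hpm : Measurable p) (hqm : Measurable q)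
    (hp : ∀ x, 0 < p x) (hq : ∀ x, 0 < q x)
    (hp1 : ∫ x, p x ∂μ = 1) (hq1 : ∫ x, q x ∂μ = 1)
    (hIP : Integrable (fun x => p x * Real.log (2 * p x / (p x + q x))) μ)
    (hIQ : Integrable (fun x => q x * Real.log (2 * q x / (p x + q x))) μ)
    (hIΔ : Integrable (fun x => (p x - q x) ^ 2 / (p x + q x)) μ) :
    ((1 / 2) * ((∫ x, p x * Real.log (2 * p x / (p x + q x)) ∂μ) +
        (∫ x, q x * Real.log (2 * q x / (p x + q x)) ∂μ)) ≥
      gJS (Real.sqrt ((1 / 2) * ∫ x, (p x - q x) ^ 2 / (p x + q x) ∂μ))) ∧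
    gJS (Real.sqrt ((1 / 2) * ∫ x, (p x - q x) ^ 2 / (p x + q x) ∂μ)) =
      Real.log 2 - Hb (Real.sqrt ((1 / 2) * ∫ x, (p x - q x) ^ 2 / (p x + q x) ∂μ)) := by
  have hm : ∀ x, 0 < p x + q x := fun x => by have := hp x; have := hq x; linarith
  have hintp : Integrable p μ := by
    by_contra h; rw [integral_undef h] at hp1; norm_num at hp1
  have hintq : Integrable q μ := by
    by_contra h; rw [integral_undef h] at hq1; norm_num at hq1
  have hintpq : Integrable (fun x => p x + q x) μ := hintp.add hintq
  have hipq : ∫ x, (p x + q x) ∂μ = 2 := by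
    rw [integral_add hintp hintq, hp1, hq1]; norm_num
  set Δ := (1 / 2) * ∫ x, (p x - q x) ^ 2 / (p x + q x) ∂μ with hΔdef
  have hΔint : ∫ x, (p x - q x) ^ 2 / (p x + q x) ∂μ = 2 * Δ := by
    rw [hΔdef]; ring
  have hΔ0 : 0 ≤ Δ := by
    have h0 : 0 ≤ ∫ x, (p x - q x) ^ 2 / (p x + q x) ∂μ :=
      integral_nonneg fun x => div_nonneg (sq_nonneg _) (hm x).le
    rw [hΔdef]; linarith
  have hμne : μ ≠ 0 := by
    intro h; rw [h] at hp1; simp at hp1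
  have hΔ1 : Δ < 1 := by
    have hRpos : ∀ x, 0 < (p x + q x) - (p x - q x) ^ 2 / (p x + q x) := by
      intro x
      have h1 : (p x - q x) ^ 2 / (p x + q x) < p x + q x := by
        rw [div_lt_iff₀ (hm x)]
        nlinarith [mul_pos (hp x) (hq x)]
      linarith
    have hRint : Integrable (fun x => (p x + q x) - (p x - q x) ^ 2 / (p x + q x)) μ :=
      hintpq.sub hIΔ
    have hsupp : Function.support (fun x => (p x + q x) - (p x - q x) ^ 2 / (p x + q x))
        = Set.univ := Set.eq_univ_of_forall fun x => ne_of_gt (hRpos x)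
    have hpos : 0 < ∫ x, ((p x + q x) - (p x - q x) ^ 2 / (p x + q x)) ∂μ := by
      rw [integral_pos_iff_support_of_nonneg_ae
        (Filter.Eventually.of_forall fun x => (hRpos x).le) hRint, hsupp]
      exact Measure.measure_univ_pos.mpr hμne
    rw [integral_sub hintpq hIΔ, hipq, hΔint] at hpos
    linarith
  set t0 := Real.sqrt Δ with ht0def
  have ht00 : 0 ≤ t0 := Real.sqrt_nonneg _
  have ht0sq : t0 ^ 2 = Δ := Real.sq_sqrt hΔ0
  have ht01 : t0 < 1 := by nlinarith
  constructor
  · -- main inequality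
    set c := aT t0 / (2 * t0) with hcdef
    have hpt : ∀ x, gJS t0 * (p x + q x)
        + c * ((p x - q x) ^ 2 / (p x + q x) - t0 ^ 2 * (p x + q x))
        ≤ p x * Real.log (2 * p x / (p x + q x))
          + q x * Real.log (2 * q x / (p x + q x)) := by
      intro x
      have hne := (hm x).ne'
      set s := (p x - q x) / (p x + q x) with hsdef
      have hs1 : -1 < s := by
        rw [hsdef, lt_div_iff₀ (hm x)]; nlinarith [hp x]
      have hs2 : s < 1 := by
        rw [hsdef, div_lt_one (hm x)]; nlinarith [hq x]
      have hk := keylem ht00 ht01 hs1 hs2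
      have hmul := mul_le_mul_of_nonneg_left hk (hm x).le
      have e1 : 2 * p x / (p x + q x) = 1 + s := by
        rw [hsdef]; field_simp; ring
      have e2 : 2 * q x / (p x + q x) = 1 - s := by
        rw [hsdef]; field_simp; ring
      have c1 : (p x + q x) * ((1 + s) / 2) = p x := by
        rw [hsdef]; field_simp; ring
      have c2 : (p x + q x) * ((1 - s) / 2) = q x := by
        rw [hsdef]; field_simp; ring
      have hid : (p x + q x) * gJS s
          = p x * Real.log (2 * p x / (p x + q x))
            + q x * Real.log (2 * q x / (p x + q x)) := by
        calc (p x + q x) * gJS s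
            = (p x + q x) * ((1 + s) / 2) * Real.log (1 + s)
              + (p x + q x) * ((1 - s) / 2) * Real.log (1 - s) := by
              simp only [gJS]; ring
          _ = _ := by rw [c1, c2, ← e1, ← e2]
      have hexp : (p x + q x) * (gJS t0 + c * (s ^ 2 - t0 ^ 2))
          = gJS t0 * (p x + q x)
            + c * ((p x - q x) ^ 2 / (p x + q x) - t0 ^ 2 * (p x + q x)) := by
        rw [hsdef]; field_simp
      calc gJS t0 * (p x + q x)
          + c * ((p x - q x) ^ 2 / (p x + q x) - t0 ^ 2 * (p x + q x))
          = (p x + q x) * (gJS t0 + c * (s ^ 2 - t0 ^ 2)) := hexp.symm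
        _ ≤ (p x + q x) * gJS s := hmul
        _ = _ := hid
    have hint0 : Integrable (fun x => gJS t0 * (p x + q x)) μ := hintpq.const_mul _
    have hint3 : Integrable (fun x => t0 ^ 2 * (p x + q x)) μ := hintpq.const_mul _
    have hint1 : Integrable
        (fun x => (p x - q x) ^ 2 / (p x + q x) - t0 ^ 2 * (p x + q x)) μ := hIΔ.sub hint3
    have hint2 : Integrable
        (fun x => c * ((p x - q x) ^ 2 / (p x + q x) - t0 ^ 2 * (p x + q x))) μ :=
      hint1.const_mul c
    have hGint : Integrable (fun x => gJS t0 * (p x + q x)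
        + c * ((p x - q x) ^ 2 / (p x + q x) - t0 ^ 2 * (p x + q x))) μ := hint0.add hint2
    have hintL : Integrable (fun x => p x * Real.log (2 * p x / (p x + q x))
        + q x * Real.log (2 * q x / (p x + q x))) μ := hIP.add hIQ
    have hmono := integral_mono hGint hintL (fun x => hpt x)
    have hGeq : ∫ x, (gJS t0 * (p x + q x)
        + c * ((p x - q x) ^ 2 / (p x + q x) - t0 ^ 2 * (p x + q x))) ∂μ
        = 2 * gJS t0 := by
      rw [integral_add hint0 hint2, integral_const_mul, integral_const_mul,
        integral_sub hIΔ hint3, integral_const_mul, hipq, hΔint, ht0sq]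
      ring
    rw [hGeq] at hmono
    rw [integral_add hIP hIQ] at hmono
    linarith
  · -- identity gJS = log 2 - Hb
    have h1t : (0:ℝ) < 1 - t0 := by linarith
    have h2t : (0:ℝ) < 1 + t0 := by linarith
    simp only [gJS, Hb]
    rw [Real.log_div h1t.ne' two_ne_zero, Real.log_div h2t.ne' two_ne_zero]
    ring
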